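/- Suppose F : X ∪ {z} → ℝ would violate asymmetric (λ, μ)-Lipschitz continuity for every choice of F(z); i.e. for all a ∈ ℝ there exist x, y ∈ X with either a - F(x) > d_{λ,μ}(z, x) or F(y) - a > d_{λ,μ}(y, z). Then there exist x, y ∈ X with F(y) - F(x) > d_{λ,μ}(y, x); hence F is not asymmetrically (λ, μ)-Lipschitz on X. -/
import Mathlib


/-- The asymmetric distance on `ℝ`: `d_{λ,μ}(t) = λt` for `t ≥ 0` and `-μt` for `t < 0`. -/
noncomputable def dAs (lam mu t : ℝ) : ℝ := if 0 ≤ t then lam * t else -(mu * t)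

/-- The asymmetric distance on `ℝⁿ`: `d_{λ,μ}(x,y) = ∑ᵢ d_{λ,μ}(xᵢ - yᵢ)`. -/
noncomputable def dAsV {n : ℕ} (lam mu : ℝ) (x y : Fin n → ℝ) : ℝ :=
  ∑ i, dAs lam mu (x i - y i)

/-- `F` is asymmetrically `(λ,μ)`-Lipschitz continuous on `X`. -/
def AsymLipschitzOn {n : ℕ} (lam mu : ℝ) (F : (Fin n → ℝ) → ℝ) (X : Set (Fin n → ℝ)) : Prop :=
  ∀ x ∈ X, ∀ y ∈ X, F x - F y ≤ dAsV lam mu x y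

lemma dAs_eq_max (lam mu : ℝ) (hlam : 0 < lam) (hmu : 0 < mu) (t : ℝ) :
    dAs lam mu t = max (lam * t) (-(mu * t)) := by
  unfold dAs
  split_ifs with ht
  · rw [max_eq_left]; nlinarith
  · rw [max_eq_right]; nlinarith [le_of_not_ge ht]

lemma dAs_subadd (lam mu : ℝ) (hlam : 0 < lam) (hmu : 0 < mu) (s t : ℝ) :
    dAs lam mu (s + t) ≤ dAs lam mu s + dAs lam mu t := by
  rw [dAs_eq_max lam mu hlam hmu, dAs_eq_max lam mu hlam hmu, dAs_eq_max lam mu hlam hmu]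
  apply max_le
  · calc lam * (s + t) = lam * s + lam * t := by ring
      _ ≤ _ := add_le_add (le_max_left _ _) (le_max_left _ _)
  · calc -(mu * (s + t)) = -(mu * s) + -(mu * t) := by ring
      _ ≤ _ := add_le_add (le_max_right _ _) (le_max_right _ _)

lemma dAsV_triangle {n : ℕ} (lam mu : ℝ) (hlam : 0 < lam) (hmu : 0 < mu)
    (x y w : Fin n → ℝ) : dAsV lam mu x w ≤ dAsV lam mu x y + dAsV lam mu y w := by
  unfold dAsV
  rw [← Finset.sum_add_distrib]
  apply Finset.sum_le_sum
  intro i _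
  have : x i - w i = (x i - y i) + (y i - w i) := by ring
  rw [this]
  exact dAs_subadd lam mu hlam hmu _ _

/-- If no value at `z` yields an asymmetrically `(λ,μ)`-Lipschitz extension, then `F` was
not asymmetrically `(λ,μ)`-Lipschitz on `X` in the first place. -/
theorem stmt5 (n : ℕ) (lam mu : ℝ) (hlam : 0 < lam) (hmu : 0 < mu)
    (X : Set (Fin n → ℝ)) (z : Fin n → ℝ) (F : (Fin n → ℝ) → ℝ)
    (h : ∀ a : ℝ, ∃ x ∈ X, ∃ y ∈ X,
      a - F x > dAsV lam mu z x ∨ F y - a > dAsV lam mu y z) :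
    (∃ x ∈ X, ∃ y ∈ X, F y - F x > dAsV lam mu y x) ∧
      ¬ AsymLipschitzOn lam mu F X := by
  have main : ∃ x ∈ X, ∃ y ∈ X, F y - F x > dAsV lam mu y x := by
    by_contra hc
    push_neg at hc
    -- hc : ∀ x ∈ X, ∀ y ∈ X, F y - F x ≤ dAsV lam mu y x
    obtain ⟨x₀, hx₀, _⟩ := h 0
    set S : Set ℝ := (fun y => F y - dAsV lam mu y z) '' X with hS
    have hne : S.Nonempty := ⟨_, x₀, hx₀, rfl⟩
    have hbd : BddAbove S := by
      refine ⟨F x₀ + dAsV lam mu z x₀, ?_⟩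
      rintro _ ⟨y, hy, rfl⟩
      dsimp only
      have h1 := hc x₀ hx₀ y hy
      have h2 := dAsV_triangle lam mu hlam hmu y z x₀
      linarith
    set a := sSup S with ha
    obtain ⟨x, hx, y, hy, hcase⟩ := h a
    rcases hcase with hcase | hcase
    · -- a > F x + dAsV z x ; find y' with F y' - d(y',z) > F x + d(z,x)
      have : F x + dAsV lam mu z x < a := by linarith
      obtain ⟨_, ⟨y', hy', rfl⟩, hgt⟩ := exists_lt_of_lt_csSup hne this
      dsimp only at hgt
      have h1 := hc x hx y' hy'
      have h2 := dAsV_triangle lam mu hlam hmu y' z x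
      linarith
    · have : F y - dAsV lam mu y z ≤ a := le_csSup hbd ⟨y, hy, rfl⟩
      linarith
  refine ⟨main, ?_⟩
  obtain ⟨x, hx, y, hy, hxy⟩ := main
  intro hL
  have := hL y hy x hx
  linarith
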